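/- The Riccati recursion preserves positive semidefiniteness: if V_{t+1} is symmetric positive semidefinite, [[Q_xx,Q_ux^T],[Q_ux,Q_uu]] is positive semidefinite, and Q_uu is positive definite, then V_t = Q_xx + F_x^T V_{t+1} F_x - (Q_ux + F_u^T V_{t+1} F_x)^T (Q_uu + F_u^T V_{t+1} F_u)^{-1} (Q_ux + F_u^T V_{t+1} F_x) is symmetric positive semidefinite. -/

import Mathlib

open Matrix

/-!
Stacking the dynamics as `F = [Fx Fu]`, the matrix `Q + Fᴴ V F` is a sum of two positive
semidefinite block matrices, and `V_t` is exactly the Schur complement of its `uu` block, which is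
positive definite.
-/

namespace Matrix

variable {ι κ ρ : Type*} [Fintype ρ]

lemma conjTranspose_fromCols_mul_mul_fromCols {R : Type*} [Semiring R] [StarRing R]
    (V : Matrix ρ ρ R) (A : Matrix ρ ι R) (B : Matrix ρ κ R) :
    (fromCols A B)ᴴ * V * fromCols A B =
      fromBlocks (Aᴴ * V * A) (Aᴴ * V * B) (Bᴴ * V * A) (Bᴴ * V * B) := by
  rw [conjTranspose_fromCols_eq_fromRows_conjTranspose, fromRows_mul, fromRows_mul_fromCols]

lemma PosSemidef.fromBlocks_add_conjTranspose_fromCols_mul_mul {R : Type*} [CommRing R]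
    [PartialOrder R] [StarRing R] [AddLeftMono R] [Fintype ι] [Fintype κ]
    {Qxx : Matrix ι ι R} {Qux : Matrix κ ι R} {Quu : Matrix κ κ R} {V : Matrix ρ ρ R}
    (hQ : (fromBlocks Qxx Quxᴴ Qux Quu).PosSemidef) (hV : V.PosSemidef)
    (Fx : Matrix ρ ι R) (Fu : Matrix ρ κ R) :
    (fromBlocks (Qxx + Fxᴴ * V * Fx) (Qux + Fuᴴ * V * Fx)ᴴ
      (Qux + Fuᴴ * V * Fx) (Quu + Fuᴴ * V * Fu)).PosSemidef := by
  convert hQ.add (hV.conjTranspose_mul_mul_same (fromCols Fx Fu)) using 1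
  rw [conjTranspose_fromCols_mul_mul_fromCols, fromBlocks_add, conjTranspose_add,
    conjTranspose_mul, conjTranspose_mul, hV.isHermitian.eq, conjTranspose_conjTranspose,
    ← Matrix.mul_assoc Fxᴴ]

theorem PosSemidef.riccati_update {K : Type*} [Field K] [PartialOrder K] [StarRing K]
    [StarOrderedRing K] [Fintype ι] [Fintype κ] [DecidableEq κ]
    {Qxx : Matrix ι ι K} {Qux : Matrix κ ι K} {Quu : Matrix κ κ K} {V : Matrix ρ ρ K}
    (hQ : (fromBlocks Qxx Quxᴴ Qux Quu).PosSemidef) (hQuu : Quu.PosDef) (hV : V.PosSemidef)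
    (Fx : Matrix ρ ι K) (Fu : Matrix ρ κ K) :
    (Qxx + Fxᴴ * V * Fx - (Qux + Fuᴴ * V * Fx)ᴴ * (Quu + Fuᴴ * V * Fu)⁻¹ *
      (Qux + Fuᴴ * V * Fx)).PosSemidef := by
  have hD : (Quu + Fuᴴ * V * Fu).PosDef := hQuu.add_posSemidef (hV.conjTranspose_mul_mul_same Fu)
  have := hD.isUnit.invertible
  have hSchur := PosDef.fromBlocks₂₂ (Qxx + Fxᴴ * V * Fx) (Qux + Fuᴴ * V * Fx)ᴴ hD
  rw [conjTranspose_conjTranspose] at hSchur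
  exact hSchur.mp (hQ.fromBlocks_add_conjTranspose_fromCols_mul_mul hV Fx Fu)

end Matrix

theorem riccati_preserves_psd
    {n m : ℕ} (Qxx Vnext : Matrix (Fin n) (Fin n) ℝ)
    (Quu : Matrix (Fin m) (Fin m) ℝ) (Qux : Matrix (Fin m) (Fin n) ℝ)
    (Fx : Matrix (Fin n) (Fin n) ℝ) (Fu : Matrix (Fin n) (Fin m) ℝ)
    (hQ : (Matrix.fromBlocks Qxx Qux.transpose Qux Quu).PosSemidef)
    (hQuu : Quu.PosDef)
    (hV : Vnext.PosSemidef) :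
    (Qxx + Fx.transpose * Vnext * Fx -
      (Qux + Fu.transpose * Vnext * Fx).transpose *
        (Quu + Fu.transpose * Vnext * Fu)⁻¹ *
        (Qux + Fu.transpose * Vnext * Fx)).PosSemidef := by
  simp only [← conjTranspose_eq_transpose_of_trivial] at hQ ⊢
  exact hQ.riccati_update hQuu hV Fx Fu
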